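/- In the explicit solution for odd N = 2n−1, applying S j^{2n-1} S to the configuration B O (RB)^{2n-2} R yields the configuration R (BR)^{2n-2} O B, which is the mirror reversal (with colors swapped appropriately) of the former. -/
import Mathlib


/-- A cell of the puzzle: a blue peg, a red peg, or an empty hole. -/
inductive Cell
  | B : Cell
  | R : Cell
  | O : Cell
  deriving DecidableEq

open Cell

/-- The four kinds of moves appearing in the explicit solution:
`S` = blue peg steps right, `s` = red peg steps left,
`J` = blue peg jumps right, `j` = red peg jumps left. -/
inductive Letter
  | S : Letter
  | s : Letter
  | J : Letter
  | j : Letter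
  deriving DecidableEq

/-- `MoveRel l c d` : performing move `l` transforms configuration `c` into `d`.
Jumps are over a single adjacent peg into the empty hole. -/
def MoveRel : Letter → List Cell → List Cell → Prop
  | .S, c, d => ∃ x y, c = x ++ B :: O :: y ∧ d = x ++ O :: B :: y
  | .s, c, d => ∃ x y, c = x ++ O :: R :: y ∧ d = x ++ R :: O :: y
  | .J, c, d => ∃ x y p, p ≠ O ∧ c = x ++ B :: p :: O :: y ∧ d = x ++ O :: p :: B :: y
  | .j, c, d => ∃ x y p, p ≠ O ∧ c = x ++ O :: p :: R :: y ∧ d = x ++ R :: p :: O :: y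

/-- `Plays w c d` : the sequence of moves `w`, each legal from the current
configuration, transforms `c` into `d`. -/
def Plays : List Letter → List Cell → List Cell → Prop
  | [], c, d => c = d
  | l :: ls, c, d => ∃ e, MoveRel l c e ∧ Plays ls e d

/-- Initial configuration `BᴺORᴺ`. -/
def startCfg (N : ℕ) : List Cell := List.replicate N B ++ O :: List.replicate N R

/-- Final configuration `RᴺOBᴺ`. -/
def finishCfg (N : ℕ) : List Cell := List.replicate N R ++ O :: List.replicate N B

lemma shiftB (m : ℕ) :
    B :: (List.replicate m ([R, B] : List Cell)).flatten
      = (List.replicate m ([B, R] : List Cell)).flatten ++ [B] := by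
  induction m with
  | zero => simp
  | succ m ih => simp [List.replicate_succ, ih]

lemma shiftR (m : ℕ) :
    R :: (List.replicate m ([B, R] : List Cell)).flatten
      = (List.replicate m ([R, B] : List Cell)).flatten ++ [R] := by
  induction m with
  | zero => simp
  | succ m ih => simp [List.replicate_succ, ih]

lemma jumps (m : ℕ) : ∀ k r : ℕ,
    Plays (List.replicate m Letter.j)
      ((List.replicate k ([R, B] : List Cell)).flatten ++ O ::
        (List.replicate (m + r) ([B, R] : List Cell)).flatten)
      ((List.replicate (k + m) ([R, B] : List Cell)).flatten ++ O ::
        (List.replicate r ([B, R] : List Cell)).flatten) := by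
  induction m with
  | zero => intro k r; simp [Plays]
  | succ m ih =>
    intro k r
    refine ⟨(List.replicate (k + 1) ([R, B] : List Cell)).flatten ++ O ::
        (List.replicate (m + r) ([B, R] : List Cell)).flatten, ?_, ?_⟩
    · refine ⟨(List.replicate k ([R, B] : List Cell)).flatten,
        (List.replicate (m + r) ([B, R] : List Cell)).flatten, B, by simp, ?_, ?_⟩
      · have : m + 1 + r = (m + r) + 1 := by omega
        rw [this, List.replicate_succ]
        simp
      · rw [List.replicate_succ']
        simp
    · have : k + (m + 1) = (k + 1) + m := by omega
      rw [this]
      exact ih (k + 1) r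


lemma Plays.append {u v : List Letter} {c e d : List Cell}
    (h1 : Plays u c e) (h2 : Plays v e d) : Plays (u ++ v) c d := by
  induction u generalizing c with
  | nil => cases h1; exact h2
  | cons l ls ih =>
    obtain ⟨f, hf, hfs⟩ := h1
    exact ⟨f, hf, ih hfs⟩

/-- In the explicit solution for odd `N = 2n - 1`, applying `S j^{2n-1} S`
(all moves being legal) to the configuration `B O (RB)^{2n-2} R` yields the
configuration `R (BR)^{2n-2} O B`, the mirror reversal with colors swapped of
the former. -/
theorem middle_stage (n : ℕ) (hn : 1 ≤ n) :
    Plays (Letter.S :: (List.replicate (2 * n - 1) Letter.j ++ [Letter.S]))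
      (B :: O :: ((List.replicate (2 * n - 2) [R, B]).flatten ++ [R]))
      (R :: ((List.replicate (2 * n - 2) [B, R]).flatten ++ [O, B])) := by
  obtain ⟨m, rfl⟩ := Nat.exists_eq_add_of_le hn
  have h1 : 2 * (1 + m) - 1 = 2 * m + 1 := by omega
  have h2 : 2 * (1 + m) - 2 = 2 * m := by omega
  rw [h1, h2]
  refine ⟨O :: B :: ((List.replicate (2 * m) ([R, B] : List Cell)).flatten ++ [R]),
    ⟨[], _, rfl, rfl⟩, ?_⟩
  refine Plays.append (e := (List.replicate (2 * m + 1) ([R, B] : List Cell)).flatten ++ [O]) ?_ ?_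
  · have h3 : O :: B :: ((List.replicate (2 * m) ([R, B] : List Cell)).flatten ++ [R])
        = (List.replicate 0 ([R, B] : List Cell)).flatten ++ O ::
          (List.replicate (2 * m + 1 + 0) ([B, R] : List Cell)).flatten := by
      simp only [Nat.add_zero, List.replicate_zero, List.flatten_nil, List.nil_append]
      rw [List.replicate_succ', List.flatten_append, ← List.cons_append, ← List.cons_append,
        shiftB]
      simp
    have h4 : (List.replicate (2 * m + 1) ([R, B] : List Cell)).flatten ++ [O]
        = (List.replicate (0 + (2 * m + 1)) ([R, B] : List Cell)).flatten ++ O ::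
          (List.replicate 0 ([B, R] : List Cell)).flatten := by simp
    rw [h3, h4]
    exact jumps (2 * m + 1) 0 0
  · refine ⟨_, ⟨(List.replicate (2 * m) ([R, B] : List Cell)).flatten ++ [R], [], ?_, ?_⟩, rfl⟩
    · rw [List.replicate_succ']
      simp
    · rw [show R :: ((List.replicate (2 * m) ([B, R] : List Cell)).flatten ++ [O, B])
          = (R :: (List.replicate (2 * m) ([B, R] : List Cell)).flatten) ++ [O, B] from rfl,
        shiftR]
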